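/- arXiv:1109.5669 — 3 statements merged into one kernel-verified Lean document; each statement's English description precedes it below -/
import Mathlib

section
/- Let X ⊂ P^n be a hypersurface of degree d with a point p of multiplicity d-1. If p' ≠ p is any singular point of X, then the line through p and p' is contained in X. -/
/-!
Write `F = x₀ q + f` and `p' = (a, v)`. The `x₀`-partial of `F` is `q`, so singularity of `p'`
gives `q(v) = 0`, and then `F(p') = 0` gives `f(v) = 0`. A point `s p + t p'` of the line has
coordinates `(s + t a, t v)`, where `F` takes the value `(s + t a) t^(d-1) q(v) + t^d f(v) = 0`.
-/

open MvPolynomial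

namespace MvPolynomial

variable {R σ : Type*} [CommSemiring R]

theorem IsHomogeneous.eval_smul {φ : MvPolynomial σ R} {m : ℕ} (hφ : φ.IsHomogeneous m)
    (c : R) (x : σ → R) : eval (c • x) φ = c ^ m * eval x φ := by
  rw [eval_eq, eval_eq, Finset.mul_sum]
  refine Finset.sum_congr rfl fun e he => ?_
  have hdeg : ∑ i ∈ e.support, e i = m := by
    simpa [Finsupp.weight_apply, Finsupp.sum] using hφ (mem_support_iff.1 he)
  simp only [Pi.smul_apply, smul_eq_mul, mul_pow, Finset.prod_mul_distrib,
    Finset.prod_pow_eq_pow_sum, hdeg]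
  ring

variable {n : ℕ}

theorem pderiv_zero_rename_succ (g : MvPolynomial (Fin n) R) :
    pderiv 0 (rename Fin.succ g) = 0 := by
  refine pderiv_eq_zero_of_notMem_vars fun h => ?_
  obtain ⟨i, -, hi⟩ := Finset.mem_image.1 (vars_rename Fin.succ g h)
  exact Fin.succ_ne_zero i hi

theorem eval_X_zero_mul_rename_succ_add (q f : MvPolynomial (Fin n) R) (x : Fin (n + 1) → R) :
    eval x (X 0 * rename Fin.succ q + rename Fin.succ f) =
      x 0 * eval (x ∘ Fin.succ) q + eval (x ∘ Fin.succ) f := by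
  simp [eval_rename]

theorem eval_pderiv_zero_X_zero_mul_rename_succ_add (q f : MvPolynomial (Fin n) R)
    (x : Fin (n + 1) → R) :
    eval x (pderiv 0 (X 0 * rename Fin.succ q + rename Fin.succ f)) = eval (x ∘ Fin.succ) q := by
  simp [Derivation.leibniz, pderiv_zero_rename_succ, eval_rename]

end MvPolynomial

theorem line_through_mult_point_and_sing_point_general
    (n d : ℕ)
    (q f : MvPolynomial (Fin n) ℂ)
    (hq : q.IsHomogeneous (d - 1)) (hf : f.IsHomogeneous d)
    (F : MvPolynomial (Fin (n + 1)) ℂ)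
    (hF : F = X 0 * rename Fin.succ q + rename Fin.succ f)
    (p p' : Fin (n + 1) → ℂ)
    (hp : p = fun i => if i = 0 then 1 else 0)
    (hsing : ∀ i, eval p' (pderiv i F) = 0)
    (hon : eval p' F = 0) :
    ∀ s t : ℂ, eval (s • p + t • p') F = 0 := by
  intro s t
  subst hF hp
  have hq0 : eval (p' ∘ Fin.succ) q = 0 :=
    (eval_pderiv_zero_X_zero_mul_rename_succ_add q f p').symm.trans (hsing 0)
  have hf0 : eval (p' ∘ Fin.succ) f = 0 := by
    rwa [eval_X_zero_mul_rename_succ_add, hq0, mul_zero, zero_add] at hon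
  have hline :
      (s • (fun i => if i = 0 then 1 else 0) + t • p') ∘ Fin.succ = t • (p' ∘ Fin.succ) := by
    funext i
    simp [Fin.succ_ne_zero i]
  rw [eval_X_zero_mul_rename_succ_add, hline, hq.eval_smul, hf.eval_smul, hq0, hf0]
  ring

/-- Let `X = V(F) ⊂ ℙⁿ` be a hypersurface of degree `d` with a point `p` of multiplicity
`d-1`, i.e. `p = (1,0,…,0)` and `F = x₀ q + f` with `q, f` homogeneous of degrees `d-1, d`
in the remaining variables. If `p' ≠ p` is any singular point of `X`, then the line
through `p` and `p'` is contained in `X`. -/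
theorem line_through_mult_point_and_sing_point
    (n d : ℕ) (hd : 2 ≤ d)
    (q f : MvPolynomial (Fin n) ℂ)
    (hq : q.IsHomogeneous (d - 1)) (hf : f.IsHomogeneous d)
    (F : MvPolynomial (Fin (n + 1)) ℂ)
    (hF : F = X 0 * rename Fin.succ q + rename Fin.succ f)
    (p p' : Fin (n + 1) → ℂ)
    (hp : p = fun i => if i = 0 then 1 else 0)
    (hp'0 : p' ≠ 0)
    (hne : ∀ c : ℂ, p' ≠ c • p)
    (hsing : ∀ i, eval p' (pderiv i F) = 0)
    (hon : eval p' F = 0) :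
    ∀ s t : ℂ, eval (s • p + t • p') F = 0 :=
  line_through_mult_point_and_sing_point_general n d q f hq hf F hF p p' hp hsing hon
end

section
/- The curve C_{2A_5} = V(x_1 x_4 - x_2 x_3, x_1 x_3^2 + x_2^2 x_4) ⊂ P^3 lies on a smooth quadric and its singular locus consists of exactly the two points (1:0:0:0) and (0:0:0:1). -/
/-!
Both gradients are explicit: `∇q = (y₃, -y₂, -y₁, y₀)` is a signed permutation of `y`, so it
never vanishes off the origin, and the quadric is smooth. On the curve, the `2 × 2` minors of the
Jacobian `(∇q, ∇g)` force `y₁ = 0` (the minor in columns 1, 3 together with `q = 0` gives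
`3 y₁² y₂ = 0`, after which `g = 0` and another minor kill `y₁`), then `y₂ = 0`, and `q = 0`
leaves `y₀ y₃ = 0`. Conversely `∇g` vanishes at both points.
-/

open MvPolynomial

namespace C2A5

variable {R : Type*} [CommRing R]

noncomputable def quadric : MvPolynomial (Fin 4) R := X 0 * X 3 - X 1 * X 2

noncomputable def cubic : MvPolynomial (Fin 4) R := X 0 * X 2 ^ 2 + X 1 ^ 2 * X 3

/-- The Jacobian of `f` and `h` has rank `≤ 1` at the common zero `y`. -/
def IsSingularPoint (f h : MvPolynomial (Fin 4) R) (y : Fin 4 → R) : Prop :=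
  eval y f = 0 ∧ eval y h = 0 ∧
    ∀ i j, eval y (pderiv i f) * eval y (pderiv j h) = eval y (pderiv j f) * eval y (pderiv i h)

lemma eval_quadric (y : Fin 4 → R) : eval y quadric = y 0 * y 3 - y 1 * y 2 := by
  simp [quadric]

lemma eval_cubic (y : Fin 4 → R) : eval y cubic = y 0 * y 2 ^ 2 + y 1 ^ 2 * y 3 := by
  simp [cubic]

lemma eval_pderiv_quadric (y : Fin 4 → R) (i : Fin 4) :
    eval y (pderiv i quadric) = ![y 3, -y 2, -y 1, y 0] i := by
  fin_cases i <;> simp [quadric, pderiv_X]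

lemma eval_pderiv_cubic (y : Fin 4 → R) (i : Fin 4) :
    eval y (pderiv i cubic) = ![y 2 ^ 2, 2 * y 1 * y 3, 2 * y 0 * y 2, y 1 ^ 2] i := by
  fin_cases i <;> simp [cubic, pderiv_X] <;> ring

lemma exists_eval_pderiv_quadric_ne_zero {y : Fin 4 → R} (hy : y ≠ 0) :
    ∃ i, eval y (pderiv i quadric) ≠ 0 := by
  obtain ⟨k, hk⟩ := Function.ne_iff.mp hy
  fin_cases k
  · exact ⟨3, by simpa [eval_pderiv_quadric] using hk⟩
  · exact ⟨2, by simpa [eval_pderiv_quadric] using hk⟩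
  · exact ⟨1, by simpa [eval_pderiv_quadric] using hk⟩
  · exact ⟨0, by simpa [eval_pderiv_quadric] using hk⟩

lemma coords_of_isSingularPoint [IsDomain R] (h3 : (3 : R) ≠ 0) {y : Fin 4 → R}
    (h : IsSingularPoint quadric cubic y) : y 1 = 0 ∧ y 2 = 0 ∧ y 0 * y 3 = 0 := by
  obtain ⟨hq, hg, hminor⟩ := h
  rw [eval_quadric] at hq
  rw [eval_cubic] at hg
  simp only [eval_pderiv_quadric, eval_pderiv_cubic] at hminor
  have m01 := hminor 0 1
  have m13 := hminor 1 3
  have m23 := hminor 2 3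
  simp only [Matrix.cons_val] at m01 m13 m23
  have hy1 : y 1 = 0 := by
    by_contra hy1
    have hy2 : y 2 = 0 := by
      have : 3 * y 1 ^ 2 * y 2 = 0 := by linear_combination (-1) * m13 - 2 * y 1 * hq
      simpa [h3, hy1] using this
    have hy3 : y 3 = 0 := by
      have : y 1 ^ 2 * y 3 = 0 := by linear_combination hg - y 0 * y 2 * hy2
      simpa [hy1] using this
    exact hy1 (pow_eq_zero_iff three_ne_zero |>.mp
      (by linear_combination (-1) * m23 - 2 * y 0 ^ 2 * hy2))
  have hy2 : y 2 = 0 :=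
    pow_eq_zero_iff three_ne_zero |>.mp (by linear_combination m01 - 2 * y 3 ^ 2 * hy1)
  exact ⟨hy1, hy2, by linear_combination hq + y 2 * hy1⟩

lemma isSingularPoint_of_coords {y : Fin 4 → R} (hy1 : y 1 = 0) (hy2 : y 2 = 0)
    (hy03 : y 0 * y 3 = 0) : IsSingularPoint quadric cubic y := by
  have hgrad (i : Fin 4) : eval y (pderiv i cubic) = 0 := by
    fin_cases i <;> simp [eval_pderiv_cubic, hy1, hy2]
  refine ⟨by simp [eval_quadric, hy1, hy03], by simp [eval_cubic, hy1, hy2], fun i j => ?_⟩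
  simp only [hgrad, mul_zero]

lemma isSingularPoint_iff [IsDomain R] (h3 : (3 : R) ≠ 0) (y : Fin 4 → R) :
    IsSingularPoint quadric cubic y ↔ y 1 = 0 ∧ y 2 = 0 ∧ y 0 * y 3 = 0 :=
  ⟨coords_of_isSingularPoint h3, fun ⟨hy1, hy2, hy03⟩ => isSingularPoint_of_coords hy1 hy2 hy03⟩

lemma coords_iff_exists_smul [NoZeroDivisors R] {y : Fin 4 → R} (hy : y ≠ 0) :
    (y 1 = 0 ∧ y 2 = 0 ∧ y 0 * y 3 = 0) ↔
      ∃ c : R, c ≠ 0 ∧ (y = c • ![1, 0, 0, 0] ∨ y = c • ![0, 0, 0, 1]) := by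
  constructor
  · rintro ⟨hy1, hy2, hy03⟩
    have hy_eq : y = ![y 0, 0, 0, y 3] := by
      ext i; fin_cases i <;> simp [hy1, hy2]
    rcases mul_eq_zero.mp hy03 with hy0 | hy3
    · refine ⟨y 3, fun hy3 => hy ?_, Or.inr ?_⟩
      · rw [hy_eq, hy0, hy3]; ext i; fin_cases i <;> rfl
      · rw [hy_eq, hy0]; ext i; fin_cases i <;> simp
    · refine ⟨y 0, fun hy0 => hy ?_, Or.inl ?_⟩
      · rw [hy_eq, hy0, hy3]; ext i; fin_cases i <;> rfl
      · rw [hy_eq, hy3]; ext i; fin_cases i <;> simp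
  · rintro ⟨c, -, rfl | rfl⟩ <;> simp

end C2A5

/-- The curve `C_{2A₅} = V(x₁x₄ - x₂x₃, x₁x₃² + x₂²x₄) ⊂ ℙ³` lies on a smooth quadric
(`x₁x₄ - x₂x₃` has nowhere-vanishing gradient away from the origin), and its singular
locus (points of `C` where the Jacobian of the two equations has rank ≤ 1) consists of
exactly the two points `(1:0:0:0)` and `(0:0:0:1)`. -/
theorem C2A5_smooth_quadric_and_sing_locus
    (q g : MvPolynomial (Fin 4) ℂ)
    (hq : q = X 0 * X 3 - X 1 * X 2)
    (hg : g = X 0 * X 2 ^ 2 + X 1 ^ 2 * X 3) :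
    (∀ y : Fin 4 → ℂ, y ≠ 0 → ∃ i, eval y (pderiv i q) ≠ 0) ∧
    (∀ y : Fin 4 → ℂ, y ≠ 0 →
      ((eval y q = 0 ∧ eval y g = 0 ∧
          ∀ i j, eval y (pderiv i q) * eval y (pderiv j g)
               = eval y (pderiv j q) * eval y (pderiv i g)) ↔
        ∃ c : ℂ, c ≠ 0 ∧ (y = c • ![1, 0, 0, 0] ∨ y = c • ![0, 0, 0, 1]))) := by
  obtain rfl : q = C2A5.quadric := hq
  obtain rfl : g = C2A5.cubic := hg
  exact ⟨fun y hy => C2A5.exists_eval_pderiv_quadric_ne_zero hy, fun y hy =>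
    (C2A5.isSingularPoint_iff (by norm_num) y).trans (C2A5.coords_iff_exists_smul hy)⟩
end

section
/- Let Λ = E_8 ⊕ E_8 ⊕ E_8 ⊕ U ⊕ U be the even unimodular lattice of signature (2,26). The lattice T = E_8 ⊕ E_8 ⊕ U ⊕ U(3) admits a primitive embedding into Λ whose orthogonal complement is isometric to E_6 ⊕ A_2. -/
open Matrix

/-- Gram matrix of the (negative definite) root lattice `A₂`. -/
def gA2 : Matrix (Fin 2) (Fin 2) ℤ := !![-2, 1; 1, -2]

/-- Gram matrix of the hyperbolic plane `U`. -/
def gU : Matrix (Fin 2) (Fin 2) ℤ := !![0, 1; 1, 0]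

/-- Gram matrix of `U(3)`, the hyperbolic plane scaled by 3. -/
def gU3 : Matrix (Fin 2) (Fin 2) ℤ := !![0, 3; 3, 0]

/-- Edges of the `E₈` Dynkin diagram (chain 0–1–2–3–4–5–6 with node 7 attached to 2). -/
def e8adj : List (ℕ × ℕ) := [(0,1),(1,2),(2,3),(3,4),(4,5),(5,6),(2,7)]

/-- Gram matrix of the (negative definite) root lattice `E₈`. -/
def gE8 : Matrix (Fin 8) (Fin 8) ℤ :=
  Matrix.of fun i j =>
    if i = j then -2 else if (min i.val j.val, max i.val j.val) ∈ e8adj then 1 else 0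

/-- Edges of the `E₆` Dynkin diagram (chain 0–1–2–3–4 with node 5 attached to 2). -/
def e6adj : List (ℕ × ℕ) := [(0,1),(1,2),(2,3),(3,4),(2,5)]

/-- Gram matrix of the (negative definite) root lattice `E₆`. -/
def gE6 : Matrix (Fin 6) (Fin 6) ℤ :=
  Matrix.of fun i j =>
    if i = j then -2 else if (min i.val j.val, max i.val j.val) ∈ e6adj then 1 else 0

/-- Index type for `Λ = E₈ ⊕ E₈ ⊕ E₈ ⊕ U ⊕ U` (rank 26). -/
abbrev ΛIdx := (Fin 8 ⊕ Fin 8) ⊕ (Fin 8 ⊕ (Fin 2 ⊕ Fin 2))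

/-- Gram matrix of the even unimodular lattice `Λ = E₈³ ⊕ U²` of signature `(2,26)`. -/
def gLambda : Matrix ΛIdx ΛIdx ℤ :=
  fromBlocks (fromBlocks gE8 0 0 gE8) 0 0 (fromBlocks gE8 0 0 (fromBlocks gU 0 0 gU))

/-- Index type for `T = E₈ ⊕ E₈ ⊕ U ⊕ U(3)` (rank 18). -/
abbrev TIdx := (Fin 8 ⊕ Fin 8) ⊕ (Fin 2 ⊕ Fin 2)

/-- Gram matrix of `T = E₈ ⊕ E₈ ⊕ U ⊕ U(3)`. -/
def gT : Matrix TIdx TIdx ℤ :=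
  fromBlocks (fromBlocks gE8 0 0 gE8) 0 0 (fromBlocks gU 0 0 gU3)

/-- Index type for `R = E₆ ⊕ A₂` (rank 8). -/
abbrev RIdx := Fin 6 ⊕ Fin 2

/-- Gram matrix of `R = E₆ ⊕ A₂`. -/
def gR : Matrix RIdx RIdx ℤ := fromBlocks gE6 0 0 gA2

/-!
Inside the third `E₈` the standard `E₆` (nodes 0–4 and 7) has orthogonal complement the `A₂`
spanned by `a = α₆` and `b = (2,4,6,5,4,3,1,3)`. Tilting it into the last hyperbolic plane
`⟨e, f⟩` as `⟨a + e, b - e⟩` keeps the Gram matrix of `A₂`, and the orthogonal complement of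
`E₆ ⊕ ⟨a + e, b - e⟩` in `E₈ ⊕ U` is spanned by `e` and `a - b + e + 3f`, a copy of `U(3)`.
The rest of `T` goes identically onto the other summands of `Λ`. Primitivity of the image and
the description of its complement are then certified by explicit integer matrices: a right
inverse of the embedding, and a splitting `E C + G Bᵀ F = 1` of the identity.
-/

namespace Matrix

variable {R m n l : Type*} [CommRing R] [Fintype m]

theorem mem_span_rows_iff_exists_vecMul (M : Matrix m n R) (v : n → R) :
    v ∈ Submodule.span R (Set.range fun i => M i) ↔ ∃ c, c ᵥ* M = v := by
  simp only [Submodule.mem_span_range_iff_exists_fun, vecMul_eq_sum]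

theorem mem_span_rows_of_smul_mem_of_mul_eq_one [NoZeroDivisors R] [Fintype n] [DecidableEq m]
    {B : Matrix m n R} {A : Matrix n m R} (hBA : B * A = 1) {v : n → R} {k : R} (hk : k ≠ 0)
    (hkv : k • v ∈ Submodule.span R (Set.range fun i => B i)) :
    v ∈ Submodule.span R (Set.range fun i => B i) := by
  obtain ⟨c, hc⟩ := (mem_span_rows_iff_exists_vecMul B _).mp hkv
  refine (mem_span_rows_iff_exists_vecMul B v).mpr ⟨v ᵥ* A, smul_right_injective _ hk ?_⟩
  calc k • (v ᵥ* A ᵥ* B) = c ᵥ* (B * A) ᵥ* B := by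
        rw [← smul_vecMul, ← smul_vecMul, ← hc]
        simp only [vecMul_vecMul, Matrix.mul_assoc]
    _ = k • v := by rw [hBA, vecMul_one, hc]

theorem mem_span_rows_iff_forall_dotProduct_mulVec_eq_zero [Fintype n] [Fintype l]
    [DecidableEq n] {B : Matrix m n R} {C : Matrix l n R} {G : Matrix n n R} (hCB : C * G * Bᵀ = 0)
    {E : Matrix n l R} {F : Matrix m n R} (hsplit : E * C + G * Bᵀ * F = 1) (w : n → R) :
    w ∈ Submodule.span R (Set.range fun i => C i) ↔
      ∀ u ∈ Submodule.span R (Set.range fun i => B i), w ⬝ᵥ G *ᵥ u = 0 := by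
  constructor
  · rintro hw u hu
    obtain ⟨d, rfl⟩ := (mem_span_rows_iff_exists_vecMul C w).mp hw
    obtain ⟨c, rfl⟩ := (mem_span_rows_iff_exists_vecMul B u).mp hu
    rw [← mulVec_transpose B c, mulVec_mulVec, dotProduct_mulVec, vecMul_vecMul,
      ← Matrix.mul_assoc, hCB, vecMul_zero, zero_dotProduct]
  · intro horth
    have hker : w ᵥ* (G * Bᵀ) = 0 := funext fun i => by
      rw [← vecMul_vecMul, Pi.zero_apply, ← horth (B i) (Submodule.subset_span ⟨i, rfl⟩),
        dotProduct_mulVec]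
      rfl
    refine (mem_span_rows_iff_exists_vecMul C w).mpr ⟨w ᵥ* E, ?_⟩
    calc w ᵥ* E ᵥ* C = w ᵥ* (E * C + G * Bᵀ * F) := by
          rw [vecMul_add, ← vecMul_vecMul, ← vecMul_vecMul w (G * Bᵀ), hker, zero_vecMul,
            add_zero]
      _ = w := by rw [hsplit, vecMul_one]

end Matrix

def embT : Matrix TIdx ΛIdx ℤ := Matrix.of fun i j =>
  match i, j with
  | .inl p, .inl q => (1 : Matrix _ _ ℤ) p q
  | .inr (.inl p), .inr (.inr (.inl q)) => (1 : Matrix _ _ ℤ) p q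
  | .inr (.inr p), .inr (.inl q) => !![0, 0, 0, 0, 0, 0, 0, 0; -2, -4, -6, -5, -4, -3, 0, -3] p q
  | .inr (.inr p), .inr (.inr (.inr q)) => !![1, 0; 1, 3] p q
  | _, _ => 0

def embTRightInv : Matrix ΛIdx TIdx ℤ := Matrix.of fun i j =>
  match i, j with
  | .inl p, .inl q => (1 : Matrix _ _ ℤ) p q
  | .inr (.inr (.inl p)), .inr (.inl q) => (1 : Matrix _ _ ℤ) p q
  | .inr (.inl p), .inr (.inr q) =>
      !![-1, 1; 0, 0; 0, 0; 0, 0; 0, 0; 0, 0; 0, 0; 1, -1] p q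
  | .inr (.inr (.inr p)), .inr (.inr q) => !![1, 0; 0, 0] p q
  | _, _ => 0

def complRows : Matrix RIdx ΛIdx ℤ := Matrix.of fun i j =>
  match i, j with
  | .inl p, .inr (.inl q) => if q = ![0, 1, 2, 3, 4, 7] p then 1 else 0
  | .inr p, .inr (.inl q) => !![0, 0, 0, 0, 0, 0, 1, 0; 2, 4, 6, 5, 4, 3, 1, 3] p q
  | .inr p, .inr (.inr (.inr q)) => !![1, 0; -1, 0] p q
  | _, _ => 0

def gE8Inv : Matrix (Fin 8) (Fin 8) ℤ :=
  !![-4, -7, -10, -8, -6, -4, -2, -5; -7, -14, -20, -16, -12, -8, -4, -10;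
     -10, -20, -30, -24, -18, -12, -6, -15; -8, -16, -24, -20, -15, -10, -5, -12;
     -6, -12, -18, -15, -12, -8, -4, -9; -4, -8, -12, -10, -8, -6, -3, -6;
     -2, -4, -6, -5, -4, -3, -2, -3; -5, -10, -15, -12, -9, -6, -3, -8]

def complCoords : Matrix ΛIdx RIdx ℤ := Matrix.of fun i j =>
  match i, j with
  | .inr (.inl p), .inl q =>
      !![1, 0, 0, 0, 0, 0; 0, 1, 0, 0, 0, 0; 0, 0, 1, 0, 0, 0; 0, 0, 0, 1, 0, 0;
         0, 0, 0, 0, 1, 0; -2, -4, -6, -5, -4, -3; 2, 4, 6, 5, 4, 3; 0, 0, 0, 0, 0, 1] p q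
  | .inr (.inr (.inr p)), .inl q => !![-2, -4, -6, -5, -4, -3; 0, 0, 0, 0, 0, 0] p q
  | .inr (.inl p), .inr q => !![0, 0; 0, 0; 0, 0; 0, 0; 0, 0; 1, 1; -1, -1; 0, 0] p q
  | .inr (.inr (.inr p)), .inr q => !![2, 1; 0, 0] p q
  | _, _ => 0

def pairingLift : Matrix TIdx ΛIdx ℤ := Matrix.of fun i j =>
  match i, j with
  | .inl (.inl p), .inl (.inl q) => gE8Inv p q
  | .inl (.inr p), .inl (.inr q) => gE8Inv p q
  | .inr (.inr p), .inr (.inl q) => !![0, 0, 0, 0, 0, 1, 1, 0; 0, 0, 0, 0, 0, -1, -1, 0] p q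
  | .inr (.inl p), .inr (.inr (.inl q)) => !![0, 1; 1, 0] p q
  | .inr (.inr p), .inr (.inr (.inr q)) => !![0, 1; 0, 0] p q
  | _, _ => 0

theorem embT_gram : embT * gLambda * embTᵀ = gT := by decide

theorem embT_mul_embTRightInv : embT * embTRightInv = 1 := by decide

theorem complRows_gram : complRows * gLambda * complRowsᵀ = gR := by decide

theorem complRows_orthogonal_embT : complRows * gLambda * embTᵀ = 0 := by decide

theorem complCoords_mul_add_pairingLift :
    complCoords * complRows + gLambda * embTᵀ * pairingLift = 1 := by decide

/-- The lattice `T = E₈ ⊕ E₈ ⊕ U ⊕ U(3)` admits a primitive embedding into the even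
unimodular lattice `Λ = E₈³ ⊕ U²` of signature `(2,26)` whose orthogonal complement is
isometric to `E₆ ⊕ A₂`.  The embedding is recorded by a matrix `B` of image vectors
(rows), with the Gram condition `B gΛ Bᵀ = gT`, primitivity of the span of the rows, and
a matrix `C` of rows spanning the orthogonal complement with Gram matrix `gE₆ ⊕ gA₂`. -/
theorem T_embeds_primitively_in_Lambda_with_complement_E6_A2 :
    ∃ B : Matrix TIdx ΛIdx ℤ,
      B * gLambda * Bᵀ = gT ∧
      (∀ (v : ΛIdx → ℤ) (k : ℤ), k ≠ 0 →
        k • v ∈ Submodule.span ℤ (Set.range fun i => B i) →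
        v ∈ Submodule.span ℤ (Set.range fun i => B i)) ∧
      ∃ Cm : Matrix RIdx ΛIdx ℤ,
        Cm * gLambda * Cmᵀ = gR ∧
        (∀ w : ΛIdx → ℤ,
          w ∈ Submodule.span ℤ (Set.range fun i => Cm i) ↔
          ∀ u ∈ Submodule.span ℤ (Set.range fun i => B i), w ⬝ᵥ gLambda.mulVec u = 0) :=
  ⟨embT, embT_gram,
    fun _ _ hk => Matrix.mem_span_rows_of_smul_mem_of_mul_eq_one embT_mul_embTRightInv hk,
    complRows, complRows_gram,
    Matrix.mem_span_rows_iff_forall_dotProduct_mulVec_eq_zero complRows_orthogonal_embT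
      complCoords_mul_add_pairingLift⟩
end
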